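/- arXiv:1901.02417 — 5 statements merged into one kernel-verified Lean document; each statement's English description precedes it below -/
import Mathlib

section
/- Let M be a Jónsson model for λ, let α<λ, and let E∈M be a set of ordinals closed under suprema of increasing sequences of length ≤β_M(α), with α∈E. Then β_M(α)∈E. -/
/-! Suppose `α < β := β_M(α)` and let `b ∈ M` be the von Neumann ordinal `β`. The set `⋃ (E ∩ b)`
is definable in `H(χ)` from `E, b ∈ M`, hence lies in `M`; it is the ordinal `γ = sup (E ∩ β)`.
Since `α ≤ γ ≤ β` and `γ ∈ M ∩ λ`, minimality of `β` gives `γ = β`. Enumerating `E ∩ β` increasingly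
yields a sequence of length `≤ β` with supremum `β`, so `β ∈ E` by the closure of `E`. -/

open FirstOrder Cardinal Set

namespace Paper

/-- Relations of the language `{∈, <}`. -/
inductive SetRel : ℕ → Type
  | mem : SetRel 2
  | lt : SetRel 2

/-- The first-order language with two binary relations, membership and a well-order. -/
def L : FirstOrder.Language := ⟨fun _ => Empty, SetRel⟩

/-- `x` is hereditarily of cardinality `< χ`. -/
def InH (χ : Cardinal.{0}) (x : ZFSet.{0}) : Prop :=
  ZFSet.Hereditarily (fun y => Cardinal.mk y.toSet.Elem < Cardinal.lift.{1, 0} χ) x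

/-- The collection `H(χ)` of sets hereditarily of cardinality `< χ`. -/
def HType (χ : Cardinal) : Type 1 := {x : ZFSet // InH χ x}

/-- `H(χ)` as a structure in the language `{∈, <}`, where `<` is interpreted as a fixed
well-order of `H(χ)` (given by the well-ordering theorem). -/
noncomputable instance HStructure (χ : Cardinal) : L.Structure (HType χ) where
  funMap := fun f _ => f.elim
  RelMap | .mem => fun v => (v 0).1 ∈ (v 1).1
         | .lt => fun v => WellOrderingRel (v 0) (v 1)

/-- `x` is the von Neumann ordinal representing the ordinal `o`. -/
def reprOrd (x : ZFSet) (o : Ordinal) : Prop := x.IsOrdinal ∧ ZFSet.rank x = o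

/-- The set of ordinals represented by a member of `M`, i.e. `M ∩ Ord`. -/
def MOrds {χ : Cardinal} (M : L.ElementarySubstructure (HType χ)) : Set Ordinal :=
  {o | ∃ x : HType χ, x ∈ M ∧ reprOrd x.1 o}

/-- `M` is a Jónsson model for `λ`: an elementary submodel of `(H(χ), ∈, <_χ)` with
`|M ∩ λ| = λ`, `λ ∈ M` and `λ ⊄ M`. -/
def IsJonssonModelFor (lam χ : Cardinal) (M : L.ElementarySubstructure (HType χ)) : Prop :=
  Cardinal.mk ↥(MOrds M ∩ Set.Iio lam.ord) = Cardinal.lift.{1} lam ∧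
  (∃ x : HType χ, x ∈ M ∧ reprOrd x.1 lam.ord) ∧
  ¬ Set.Iio lam.ord ⊆ MOrds M

/-- The map `β_M(α) = min((M ∩ λ) \ α)`. -/
noncomputable def betaM {χ : Cardinal} (M : L.ElementarySubstructure (HType χ))
    (lam : Cardinal) (α : Ordinal) : Ordinal :=
  sInf ((MOrds M ∩ Set.Iio lam.ord) \ Set.Iio α)

/-- The set of ordinals coded by the elements of the ZF-set `e`. -/
def decodeOrds (e : ZFSet) : Set Ordinal := {o | ∃ y, y ∈ e ∧ reprOrd y o}

end Paper

namespace ZFSet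

theorem IsOrdinal.sUnion {x : ZFSet} (h : ∀ y ∈ x, y.IsOrdinal) : (⋃₀ x : ZFSet).IsOrdinal :=
  isOrdinal_iff_forall_mem_isOrdinal.2
    ⟨IsTransitive.sUnion' fun y hy => (h y hy).isTransitive, fun z hz => by
      obtain ⟨y, hy, hzy⟩ := mem_sUnion.1 hz
      exact (h y hy).mem hzy⟩

theorem rank_sUnion (x : ZFSet) : rank (⋃₀ x : ZFSet) = sSup (rank '' x.toSet) := by
  have hbdd : BddAbove (rank '' x.toSet) := ⟨rank x, by
    rintro _ ⟨y, hy, rfl⟩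
    exact (rank_lt_of_mem hy).le⟩
  refine le_antisymm (rank_le_iff.2 fun z hz => ?_) (csSup_le' ?_)
  · obtain ⟨y, hy, hzy⟩ := mem_sUnion.1 hz
    exact (rank_lt_of_mem hzy).trans_le (le_csSup hbdd ⟨y, hy, rfl⟩)
  · rintro _ ⟨y, hy, rfl⟩
    exact rank_mono fun z hz => mem_sUnion_of_mem hz hy

end ZFSet

namespace FirstOrder.Language.ElementarySubstructure

variable {L : Language} {N : Type*} [L.Structure N] {α : Type*}

theorem mem_of_realize_unique (S : L.ElementarySubstructure N) (φ : L.BoundedFormula α 1)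
    {v : α → N} (hv : ∀ a, v a ∈ S) {x : N} (hx : φ.Realize v ![x])
    (huniq : ∀ y, φ.Realize v ![y] → y = x) : x ∈ S := by
  have snoc_eq {P : Type _} (xs : Fin 0 → P) (a : P) : Fin.snoc xs a = ![a] :=
    funext fun i => by fin_cases i; rfl
  let w : α → S := fun a => ⟨v a, hv a⟩
  have hN : φ.ex.Realize (S.subtype ∘ w) (S.subtype ∘ default) :=
    BoundedFormula.realize_ex.2 ⟨x, by rwa [snoc_eq]⟩
  obtain ⟨y, hy⟩ :=
    BoundedFormula.realize_ex.1 ((S.subtype.map_boundedFormula φ.ex w default).1 hN)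
  rw [snoc_eq] at hy
  have hy' : φ.Realize v ![(y : N)] := by
    have h := (S.subtype.map_boundedFormula φ w ![y]).2 hy
    rwa [show S.subtype ∘ ![y] = ![(y : N)] from funext fun i => by fin_cases i; rfl] at h
  exact huniq _ hy' ▸ y.2

end FirstOrder.Language.ElementarySubstructure

theorem Ordinal.exists_strictMonoOn_image_Iio_eq {s : Set Ordinal} {β : Ordinal}
    (hs : s ⊆ Set.Iio β) :
    ∃ ι ≤ β, ∃ f : Ordinal → Ordinal, StrictMonoOn f (Set.Iio ι) ∧ f '' Set.Iio ι = s := by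
  -- `enumOrd` needs an unbounded set; padding `s` with `[β, ∞)` puts `β` at the position `ι`.
  set t := s ∪ Set.Ici β
  have hunb : ¬ BddAbove t := fun h => not_bddAbove_Ici β (h.mono Set.subset_union_right)
  have hmono := enumOrd_strictMono hunb
  obtain ⟨ι, hι⟩ := enumOrd_surjective hunb (Set.mem_union_right s (Set.mem_Ici.2 le_rfl))
  have hlt : ∀ i, i < ι ↔ enumOrd t i ∈ s := fun i => by
    rw [← hmono.lt_iff_lt, hι]
    rcases enumOrd_mem hunb i with h | h
    · exact iff_of_true (hs h) h
    · exact iff_of_false (not_lt.2 h) fun h' => (hs h').not_ge (Set.mem_Ici.1 h)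
  refine ⟨ι, hι ▸ le_enumOrd_self hunb, enumOrd t, hmono.strictMonoOn _, ?_⟩
  ext o
  refine ⟨?_, fun ho => ?_⟩
  · rintro ⟨i, hi, rfl⟩
    exact (hlt i).1 hi
  · obtain ⟨i, rfl⟩ := enumOrd_surjective hunb (Set.mem_union_left _ ho)
    exact ⟨i, (hlt i).2 ho, rfl⟩

namespace Paper

open FirstOrder.Language

variable {χ : Cardinal}

theorem InH.of_subset {x y : ZFSet} (hy : InH χ y) (hxy : x ⊆ y) : InH χ x :=
  ZFSet.hereditarily_iff.2
    ⟨(Cardinal.mk_le_mk_of_subset fun _ hz => hxy hz).trans_lt hy.self, fun _ hz => hy.mem (hxy hz)⟩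

theorem HType.val_eq_sUnion_inter_iff (e b x : HType χ) :
    x.1 = ZFSet.sUnion (e.1 ∩ b.1) ↔
      ∀ z : HType χ, z.1 ∈ x.1 ↔ ∃ y : HType χ, y.1 ∈ e.1 ∧ y.1 ∈ b.1 ∧ z.1 ∈ y.1 := by
  simp only [ZFSet.ext_iff, ZFSet.mem_sUnion, ZFSet.mem_inter]
  refine ⟨fun h z => ⟨fun hz => ?_, ?_⟩, fun h z => ⟨fun hz => ?_, ?_⟩⟩
  · obtain ⟨y, ⟨hye, hyb⟩, hzy⟩ := (h z.1).1 hz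
    exact ⟨⟨y, e.2.mem hye⟩, hye, hyb, hzy⟩
  · rintro ⟨y, hye, hyb, hzy⟩
    exact (h z.1).2 ⟨y.1, ⟨hye, hyb⟩, hzy⟩
  · obtain ⟨y, hye, hyb, hzy⟩ := (h ⟨z, x.2.mem hz⟩).1 hz
    exact ⟨y.1, ⟨hye, hyb⟩, hzy⟩
  · rintro ⟨y, ⟨hye, hyb⟩, hzy⟩
    exact (h ⟨z, (e.2.mem hye).mem hzy⟩).2 ⟨⟨y, e.2.mem hye⟩, hye, hyb, hzy⟩

def memFormula {n : ℕ} (t u : L.Term (Fin 2 ⊕ Fin n)) : L.BoundedFormula (Fin 2) n :=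
  Relations.boundedFormula₂ (SetRel.mem : L.Relations 2) t u

-- `∀ z, z ∈ x ↔ ∃ y, y ∈ e ∧ y ∈ b ∧ z ∈ y`, with `x = &0`, `z = &1`, `y = &2` and free `e`, `b`
def sUnionInterFormula : L.BoundedFormula (Fin 2) 1 :=
  ∀' (memFormula &1 &0 ⇔
    ∃' (memFormula &2 (Term.var (Sum.inl 0)) ⊓
      (memFormula &2 (Term.var (Sum.inl 1)) ⊓ memFormula &1 &2)))

theorem realize_sUnionInterFormula (e b x : HType χ) :
    sUnionInterFormula.Realize ![e, b] ![x] ↔ x.1 = ZFSet.sUnion (e.1 ∩ b.1) := by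
  have realize_memFormula {n : ℕ} (t u : L.Term (Fin 2 ⊕ Fin n)) (xs : Fin n → HType χ) :
      (memFormula t u).Realize ![e, b] xs ↔
        (t.realize (Sum.elim ![e, b] xs)).1 ∈ (u.realize (Sum.elim ![e, b] xs)).1 := Iff.rfl
  rw [HType.val_eq_sUnion_inter_iff]
  simp [sUnionInterFormula, realize_memFormula]

theorem sUnion_inter_mem {M : L.ElementarySubstructure (HType χ)} {e b : HType χ}
    (he : e ∈ M) (hb : b ∈ M) (h : InH χ (ZFSet.sUnion (e.1 ∩ b.1))) : (⟨_, h⟩ : HType χ) ∈ M :=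
  M.mem_of_realize_unique sUnionInterFormula (v := ![e, b])
    (by simp [Fin.forall_fin_two, he, hb])
    ((realize_sUnionInterFormula e b _).2 rfl)
    fun y hy => Subtype.ext ((realize_sUnionInterFormula e b y).1 hy)

theorem decodeOrds_inter_Iio_rank {e b : ZFSet} (hords : ∀ y ∈ e, y.IsOrdinal)
    (hb : b.IsOrdinal) :
    decodeOrds e ∩ Iio b.rank = ZFSet.rank '' (e ∩ b).toSet := by
  ext o
  constructor
  · rintro ⟨⟨y, hye, hy, rfl⟩, hlt⟩
    exact ⟨y, ZFSet.mem_inter.2 ⟨hye, (ZFSet.IsOrdinal.rank_lt_iff_mem hy hb).1 hlt⟩, rfl⟩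
  · rintro ⟨y, hy, rfl⟩
    obtain ⟨hye, hyb⟩ := ZFSet.mem_inter.1 hy
    exact ⟨⟨y, hye, hords y hye, rfl⟩, ZFSet.rank_lt_of_mem hyb⟩

theorem sSup_decodeOrds_inter_Iio_mem_MOrds {M : L.ElementarySubstructure (HType χ)}
    {e : HType χ} (he : e ∈ M) (hords : ∀ y ∈ e.1, y.IsOrdinal) {β : Ordinal}
    (hβ : β ∈ MOrds M) : sSup (decodeOrds e.1 ∩ Iio β) ∈ MOrds M := by
  obtain ⟨b, hbM, hb, rfl⟩ := hβ
  have hsub : ZFSet.sUnion (e.1 ∩ b.1) ⊆ b.1 := fun z hz => by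
    obtain ⟨y, hy, hzy⟩ := ZFSet.mem_sUnion.1 hz
    exact hb.mem_trans hzy (ZFSet.mem_inter.1 hy).2
  refine ⟨_, sUnion_inter_mem he hbM (b.2.of_subset hsub),
    ZFSet.IsOrdinal.sUnion fun y hy => hords y (ZFSet.mem_inter.1 hy).1, ?_⟩
  rw [ZFSet.rank_sUnion, decodeOrds_inter_Iio_rank hords hb]

theorem betaM_mem {lam : Cardinal} {M : L.ElementarySubstructure (HType χ)}
    (hM : IsJonssonModelFor lam χ M) {α : Ordinal} (hα : α < lam.ord) :
    betaM M lam α ∈ (MOrds M ∩ Iio lam.ord) \ Iio α := by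
  refine csInf_mem (Set.sdiff_nonempty.2 fun hsub => hα.not_ge ?_)
  have hcard := Cardinal.mk_le_mk_of_subset hsub
  rw [hM.1, Cardinal.mk_Iio_ordinal, Cardinal.lift_le] at hcard
  exact Cardinal.ord_le.2 hcard

theorem sSup_decodeOrds_inter_Iio_betaM {lam : Cardinal}
    {M : L.ElementarySubstructure (HType χ)} (hM : IsJonssonModelFor lam χ M) {α : Ordinal}
    (hα : α < lam.ord) {e : HType χ} (he : e ∈ M)
    (hords : ∀ y ∈ e.1, y.IsOrdinal) (hαE : α ∈ decodeOrds e.1) (hαβ : α < betaM M lam α) :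
    sSup (decodeOrds e.1 ∩ Iio (betaM M lam α)) = betaM M lam α := by
  obtain ⟨⟨hβM, hβlam⟩, -⟩ := betaM_mem hM hα
  have hγβ : sSup (decodeOrds e.1 ∩ Iio (betaM M lam α)) ≤ betaM M lam α :=
    csSup_le' fun o ho => ho.2.le
  have hαγ : α ≤ sSup (decodeOrds e.1 ∩ Iio (betaM M lam α)) :=
    le_csSup ⟨_, fun o ho => ho.2.le⟩ ⟨hαE, hαβ⟩
  exact hγβ.antisymm (csInf_le' ⟨⟨sSup_decodeOrds_inter_Iio_mem_MOrds he hords hβM,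
    hγβ.trans_lt hβlam⟩, not_lt.2 hαγ⟩)

theorem stmt1_general (lam χ : Cardinal)
    (M : L.ElementarySubstructure (HType χ)) (hM : IsJonssonModelFor lam χ M)
    (α : Ordinal) (hα : α < lam.ord)
    (e : HType χ) (he : e ∈ M) (hords : ∀ y, y ∈ e.1 → ZFSet.IsOrdinal y)
    (hαE : α ∈ decodeOrds e.1)
    (hclosed : ∀ ι : Ordinal, ι ≤ betaM M lam α → ∀ f : Ordinal → Ordinal,
      StrictMonoOn f (Set.Iio ι) → (∀ i < ι, f i ∈ decodeOrds e.1) →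
      sSup (f '' Set.Iio ι) ∈ decodeOrds e.1) :
    betaM M lam α ∈ decodeOrds e.1 := by
  rcases (not_lt.1 (betaM_mem hM hα).2 : α ≤ _).eq_or_lt with hαβ | hαβ
  · rwa [← hαβ]
  obtain ⟨ι, hι, f, hf, himg⟩ :=
    Ordinal.exists_strictMonoOn_image_Iio_eq (inter_subset_right (s := decodeOrds e.1))
  have hsup := hclosed ι hι f hf fun i hi => (himg ▸ mem_image_of_mem f hi).1
  rwa [himg, sSup_decodeOrds_inter_Iio_betaM hM hα he hords hαE hαβ] at hsup

/-- If `M` is a Jónsson model for `λ`, `α < λ`, and `E ∈ M` is a set of ordinals closed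
under suprema of increasing sequences of length `≤ β_M(α)` with `α ∈ E`, then `β_M(α) ∈ E`. -/
theorem stmt1 (lam χ : Cardinal) (hlam : lam < χ) (hχ : χ.IsRegular)
    (M : L.ElementarySubstructure (HType χ)) (hM : IsJonssonModelFor lam χ M)
    (α : Ordinal) (hα : α < lam.ord)
    (e : HType χ) (he : e ∈ M) (hords : ∀ y, y ∈ e.1 → ZFSet.IsOrdinal y)
    (hαE : α ∈ decodeOrds e.1)
    (hclosed : ∀ ι : Ordinal, ι ≤ betaM M lam α → ∀ f : Ordinal → Ordinal,
      StrictMonoOn f (Set.Iio ι) → (∀ i < ι, f i ∈ decodeOrds e.1) →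
      sSup (f '' Set.Iio ι) ∈ decodeOrds e.1) :
    betaM M lam α ∈ decodeOrds e.1 :=
  stmt1_general lam χ M hM α hα e he hords hαE hclosed

end Paper
end

section
/- If λ is weakly inaccessible and GH(θ,λ)≤λ for some regular θ with ω<θ<λ, then for every δ<λ we have GH(θ,δ)<λ. -/
/-!
Every `f : θ → δ` lies below the constant function `δ` modulo the bounded ideal, so
`GH(θ, δ) ≤ ‖δ‖ + 1`. The constant `δ` maps into `λ`, hence `‖δ‖ < GH(θ, λ) ≤ λ`, and `λ` is a
limit ordinal. For `‖δ‖` to be a genuine rank, `<_bd` must be well-founded: a descending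
sequence would descend pointwise above the supremum of countably many bounds, which is below
`θ` because `cf θ > ω`.
-/

open Cardinal Set

namespace Paper

/-- `g < f` modulo the ideal of bounded subsets of `θ` (functions viewed on `Iio θ`). -/
def ltBd (θo : Ordinal) (g f : Ordinal → Ordinal) : Prop :=
  ∃ β < θo, ∀ i, β ≤ i → i < θo → g i < f i

/-- The ordinal rank of an accessible element of a relation:
`rank(a) = sup { rank(b) + 1 : b r a }`. -/
noncomputable def accRank {α : Type*} {r : α → α → Prop} {a : α} (h : Acc r a) : Ordinal.{0} :=
  Acc.rec (motive := fun _ _ => Ordinal.{0})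
    (fun x _ ih => sSup (Set.range fun y : {y : α // r y x} => Order.succ (ih y.1 y.2))) h

open scoped Classical in
/-- The Galvin–Hajnal rank `‖f‖` of `f : θ → ON` modulo the bounded ideal on `θ`:
`‖f‖ = sup {‖g‖ + 1 : g <_bd f}` (junk value `0` if `f` is not in the well-founded part). -/
noncomputable def GHrank (θo : Ordinal) (f : Ordinal → Ordinal) : Ordinal :=
  if h : Acc (ltBd θo) f then accRank h else 0

/-- `GH(θ, λ) = min { α : ∀ f : θ → λ, ‖f‖ < α }`. -/
noncomputable def GHbound (θo lamo : Ordinal) : Ordinal :=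
  sInf {a : Ordinal | ∀ f : Ordinal → Ordinal, (∀ i < θo, f i < lamo) → GHrank θo f < a}

/-- A weakly inaccessible cardinal: an uncountable regular limit cardinal. -/
def IsWInaccessible (c : Cardinal) : Prop := ℵ₀ < c ∧ c.IsRegular ∧ Order.IsSuccLimit c

def EqBd (θo : Ordinal) (f f' : Ordinal → Ordinal) : Prop :=
  ∃ β < θo, ∀ i, β ≤ i → i < θo → f i = f' i

lemma accRank_eq {α : Type*} {r : α → α → Prop} {x : α} (h : Acc r x) :
    accRank h = sSup (range fun y : {y // r y x} => Order.succ (accRank (h.inv y.2))) := by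
  cases h
  rfl

lemma acc_of_pred_iff {α : Type*} {r : α → α → Prop} {a b : α} (hab : ∀ g, r g a ↔ r g b)
    (ha : Acc r a) : Acc r b :=
  ⟨b, fun g hg => ha.inv ((hab g).2 hg)⟩

lemma accRank_eq_of_pred_iff {α : Type*} {r : α → α → Prop} {a b : α}
    (hab : ∀ g, r g a ↔ r g b) (ha : Acc r a) (hb : Acc r b) : accRank ha = accRank hb := by
  rw [accRank_eq ha, accRank_eq hb]
  congr 1
  ext
  exact ⟨fun ⟨⟨y, hy⟩, e⟩ => ⟨⟨y, (hab y).1 hy⟩, e⟩, fun ⟨⟨y, hy⟩, e⟩ => ⟨⟨y, (hab y).2 hy⟩, e⟩⟩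

lemma ltBd_wellFounded {θo : Ordinal.{0}} (hθo : ℵ₀ < θo.cof) :
    WellFounded (ltBd θo : (Ordinal.{0} → Ordinal.{0}) → _ → Prop) := by
  refine wellFounded_iff_isEmpty_descending_chain.2 ⟨fun ⟨f, hf⟩ => ?_⟩
  choose β hβ hfβ using hf
  have hsup : ⨆ n, β n < θo := Ordinal.iSup_lt_of_lt_cof (by rwa [Cardinal.mk_nat]) hβ
  exact not_strictAnti_of_wellFoundedLT (fun n => f n (⨆ n, β n))
    (strictAnti_nat_of_succ_lt fun n => hfβ n _ (Ordinal.le_iSup β n) hsup)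

section
variable {θo : Ordinal.{0}} {f f' g : Ordinal.{0} → Ordinal.{0}}

lemma GHrank_eq_accRank (h : Acc (ltBd θo) f) : GHrank θo f = accRank h :=
  dif_pos h

lemma EqBd.ltBd_iff (h : EqBd θo f f') (g : Ordinal → Ordinal) :
    ltBd θo g f ↔ ltBd θo g f' := by
  obtain ⟨β, hβ, hff'⟩ := h
  constructor <;> rintro ⟨γ, hγ, hg⟩ <;> refine ⟨max β γ, max_lt hβ hγ, fun i hi hi' => ?_⟩
  · rw [← hff' i (le_of_max_le_left hi) hi']
    exact hg i (le_of_max_le_right hi) hi'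
  · rw [hff' i (le_of_max_le_left hi) hi']
    exact hg i (le_of_max_le_right hi) hi'

lemma EqBd.symm (h : EqBd θo f f') : EqBd θo f' f :=
  let ⟨β, hβ, hff'⟩ := h
  ⟨β, hβ, fun i hi hi' => (hff' i hi hi').symm⟩

lemma GHrank_congr (h : EqBd θo f f') : GHrank θo f = GHrank θo f' := by
  by_cases hf : Acc (ltBd θo) f
  · have hf' := acc_of_pred_iff h.ltBd_iff hf
    rw [GHrank_eq_accRank hf, GHrank_eq_accRank hf']
    exact accRank_eq_of_pred_iff h.ltBd_iff hf hf'
  · have hf' : ¬Acc (ltBd θo) f' := fun hf' => hf (acc_of_pred_iff h.symm.ltBd_iff hf')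
    rw [GHrank, GHrank, dif_neg hf, dif_neg hf']

lemma bddAbove_GHrank_image (hθo : 0 < θo) (μ : Ordinal.{0}) :
    BddAbove (GHrank θo '' {f | ∀ i < θo, f i < μ}) := by
  -- the ranks only depend on the values below `θo`, so they are indexed by a small type
  refine (Ordinal.bddAbove_of_small (s := range fun u : Iio θo → Iio μ =>
    GHrank θo fun i => if h : i < θo then (u ⟨i, h⟩ : Ordinal) else 0)).mono ?_
  rintro _ ⟨f, hf, rfl⟩
  exact ⟨fun i => ⟨f i, hf i i.2⟩, GHrank_congr ⟨0, hθo, fun i _ hi => dif_pos hi⟩⟩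

lemma GHrank_lt_GHrank (hf : Acc (ltBd θo) f) (hg : ltBd θo g f) :
    GHrank θo g < GHrank θo f := by
  have hθo : 0 < θo := hg.elim fun _ h => pos_of_gt h.1
  set μ := ⨆ i : Iio θo, Order.succ (f i)
  -- `sSup` of an unbounded set is junk; the predecessors' ranks are bounded because each is the
  -- rank of a function into `μ`
  have hbdd : BddAbove (range fun y : {y // ltBd θo y f} =>
      Order.succ (accRank (hf.inv y.2))) := by
    refine (Order.succ_mono.map_bddAbove (bddAbove_GHrank_image hθo μ)).mono ?_
    rintro _ ⟨⟨y, hy⟩, rfl⟩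
    have ⟨γ, hγ, hyf⟩ := hy
    have hmin : ∀ i < θo, min (y i) (f i) < μ := fun i hi =>
      (min_le_right _ _).trans_lt <| (Order.lt_succ _).trans_le <|
        Ordinal.le_iSup (fun i : Iio θo => Order.succ (f i)) ⟨i, hi⟩
    have hrank : GHrank θo (fun i => min (y i) (f i)) = accRank (hf.inv hy) :=
      (GHrank_congr ⟨γ, hγ, fun i hi hi' => min_eq_left (hyf i hi hi').le⟩).trans
        (GHrank_eq_accRank _)
    exact ⟨_, ⟨_, hmin, hrank⟩, rfl⟩
  rw [GHrank_eq_accRank hf, GHrank_eq_accRank (hf.inv hg), accRank_eq hf]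
  exact Order.succ_le_iff.1 (le_csSup hbdd ⟨⟨g, hg⟩, rfl⟩)

lemma GHrank_lt_GHbound (hθo : 0 < θo) {μ : Ordinal.{0}} (hf : ∀ i < θo, f i < μ) :
    GHrank θo f < GHbound θo μ := by
  refine csInf_mem (s := {a | ∀ f : Ordinal → Ordinal, (∀ i < θo, f i < μ) → GHrank θo f < a})
    ⟨Order.succ (sSup (GHrank θo '' {f | ∀ i < θo, f i < μ})), fun g hg => ?_⟩ f hf
  exact Order.lt_succ_iff.2 (le_csSup (bddAbove_GHrank_image hθo μ) ⟨g, hg, rfl⟩)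

lemma GHbound_le_succ_GHrank_const (hθo : 0 < θo) {δ : Ordinal.{0}}
    (h : Acc (ltBd θo) fun _ => δ) : GHbound θo δ ≤ Order.succ (GHrank θo fun _ => δ) :=
  csInf_le' fun _ hf => (GHrank_lt_GHrank h ⟨0, hθo, fun i _ hi => hf i hi⟩).trans_le
    (Order.le_succ _)

end

/-- if `λ` is weakly inaccessible, `ω < θ < λ` is regular and
`GH(θ, λ) ≤ λ`, then `GH(θ, δ) < λ` for every `δ < λ`. -/
theorem stmt8 (lam θ : Cardinal) (hw : IsWInaccessible lam)
    (hθreg : θ.IsRegular) (hθ0 : ℵ₀ < θ) (hθlam : θ < lam)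
    (hGH : GHbound θ.ord lam.ord ≤ lam.ord) :
    ∀ δ < lam.ord, GHbound θ.ord δ < lam.ord := by
  intro δ hδ
  have hcof : ℵ₀ < θ.ord.cof := by rwa [hθreg.cof_ord]
  have hθo : 0 < θ.ord := Cardinal.ord_pos.2 (aleph0_pos.trans hθ0)
  calc GHbound θ.ord δ
      ≤ Order.succ (GHrank θ.ord fun _ => δ) :=
        GHbound_le_succ_GHrank_const hθo ((ltBd_wellFounded hcof).apply _)
    _ < lam.ord := (isSuccLimit_ord hw.1.le).succ_lt
        ((GHrank_lt_GHbound hθo fun _ _ => hδ).trans_le hGH)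

end Paper
end

section
/- Let I be an ideal on a set A and θ a regular uncountable cardinal. Then I is weakly θ-saturated and θ-indecomposable if and only if I is θ-irregular. -/
open Cardinal Set

namespace Paper

variable {A : Type}

/-- `I` is weakly `θ`-saturated: the underlying set cannot be partitioned into `θ`-many
pairwise disjoint `I`-positive pieces. -/
def WeaklySaturated (I : Order.Ideal (Set A)) (θ : Cardinal.{0}) : Prop :=
  ¬ ∃ f : θ.ord.ToType → Set A, (Pairwise fun i j => Disjoint (f i) (f j)) ∧
      (∀ i, f i ∉ I) ∧ (⋃ i, f i) = Set.univ

/-- `I` is `θ`-indecomposable: `I` is closed under unions of `⊆`-increasing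
`θ`-sequences of its members. -/
def Indecomposable (I : Order.Ideal (Set A)) (θ : Cardinal.{0}) : Prop :=
  ∀ f : θ.ord.ToType → Set A, Monotone f → (∀ i, f i ∈ I) → (⋃ i, f i) ∈ I

/-- `I` is `θ`-irregular: any `θ`-sequence of `I`-positive sets has a subfamily of full
size `θ` with nonempty intersection. -/
def Irregular (I : Order.Ideal (Set A)) (θ : Cardinal.{0}) : Prop :=
  ∀ f : θ.ord.ToType → Set A, (∀ i, f i ∉ I) →
    ∃ H : Set θ.ord.ToType, Cardinal.mk H.Elem = θ ∧ (⋂ i ∈ H, f i).Nonempty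

/-!
If `I` is not `θ`-irregular, there are `I`-positive sets `f i` such that every point lies in
fewer than `θ` of them. By regularity each point `x` then lies in `B j`, the set of points
belonging only to sets `f i` with `i < j`, for some `j`. The sets `B j` increase and cover
everything, while `f j` misses `B j`; so by indecomposability above every `B d` some `B d'`
adds a positive piece, and a recursion of length `θ` strings these pieces into `θ` disjoint
positive sets, against weak saturation. Conversely, a `θ`-family of sets with a point in
common cannot be pairwise disjoint, and for an increasing union `⋃ f ∉ I` the positive sets
`⋃ f \ f i` cannot share a point along a cofinal set of indices.
-/

section RegularCardinal

universe u

variable {θ : Cardinal.{u}}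

theorem mk_Iio_ord_toType_lt (i : θ.ord.ToType) : #(Iio i) < θ := by
  simpa using mk_Iio_lt i

theorem exists_forall_lt_of_mk_lt (hθ : θ.IsRegular) {s : Set θ.ord.ToType} (hs : #s < θ) :
    ∃ b, ∀ i ∈ s, i < b :=
  not_isCofinal_iff.1 fun h =>
    (Order.cof_le h).not_gt (by rwa [Ordinal.cof_toType, hθ.cof_ord])

theorem exists_mem_ge_of_mk_eq {s : Set θ.ord.ToType} (hs : #s = θ) (j : θ.ord.ToType) :
    ∃ i ∈ s, j ≤ i := by
  by_contra! h
  have hle := mk_le_mk_of_subset (show s ⊆ Iio j from h)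
  rw [hs] at hle
  exact hle.not_gt (mk_Iio_ord_toType_lt j)

theorem exists_forall_map_lt_of_lt (hθ : θ.IsRegular) (g : θ.ord.ToType → θ.ord.ToType) :
    ∃ h : θ.ord.ToType → θ.ord.ToType, ∀ ⦃η ξ⦄, η < ξ → g (h η) < h ξ := by
  have bound : ∀ (ξ : θ.ord.ToType) (ih : ∀ η < ξ, θ.ord.ToType),
      ∃ b, ∀ η (hη : η < ξ), g (ih η hη) < b := by
    intro ξ ih
    obtain ⟨b, hb⟩ := exists_forall_lt_of_mk_lt hθ
      (s := range fun η : Iio ξ => g (ih η η.2))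
      (mk_range_le.trans_lt (mk_Iio_ord_toType_lt ξ))
    exact ⟨b, fun η hη => hb _ ⟨⟨η, hη⟩, rfl⟩⟩
  choose next hnext using bound
  set h := IsWellFounded.fix (· < ·) next
  refine ⟨h, fun η ξ hηξ => ?_⟩
  rw [show h ξ = next ξ fun η _ => h η from IsWellFounded.fix_eq _ _ ξ]
  exact hnext ξ (fun η _ => h η) η hηξ

end RegularCardinal

variable {I : Order.Ideal (Set A)} {θ : Cardinal.{0}}

theorem WeaklySaturated.exists_mem_of_pairwise_disjoint [Nonempty θ.ord.ToType]
    (hS : WeaklySaturated I θ) {P : θ.ord.ToType → Set A}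
    (hP : Pairwise fun i j => Disjoint (P i) (P j)) :
    ∃ i, P i ∈ I := by
  by_contra! hpos
  obtain ⟨i₀⟩ := ‹Nonempty θ.ord.ToType›
  classical
  set L := (⋃ i, P i)ᶜ
  have hL : ∀ i, Disjoint L (P i) := fun i =>
    disjoint_compl_left.mono_right (subset_iUnion P i)
  set Q := Function.update P i₀ (P i₀ ∪ L)
  have hPQ : ∀ i, P i ⊆ Q i := fun i => by
    rcases eq_or_ne i i₀ with rfl | hi
    · simp [Q]
    · simp [Q, hi]
  refine hS ⟨Q, fun i j hij => ?_, fun i hi => hpos i (I.lower (hPQ i) hi), ?_⟩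
  · rcases eq_or_ne i i₀ with rfl | hi
    · simpa [Q, hij.symm] using ⟨hP hij, hL j⟩
    rcases eq_or_ne j i₀ with rfl | hj
    · simpa [Q, hij] using ⟨hP hij, (hL i).symm⟩
    simpa [Q, hi, hj] using hP hij
  · refine eq_univ_of_forall fun x => ?_
    by_cases hx : x ∈ ⋃ i, P i
    · obtain ⟨i, hi⟩ := mem_iUnion.1 hx
      exact mem_iUnion.2 ⟨i, hPQ i hi⟩
    · exact mem_iUnion.2 ⟨i₀, by simp only [Q, Function.update_self]; exact Or.inr hx⟩

theorem Indecomposable.exists_sdiff_notMem {B : θ.ord.ToType → Set A} (hI : Indecomposable I θ)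
    (hB : Monotone B) (hcover : ⋃ j, B j = Set.univ) {d : θ.ord.ToType} (hd : (B d)ᶜ ∉ I) :
    ∃ d', B d' \ B d ∉ I := by
  by_contra! h
  have := hI (fun d' => B d' \ B d) (fun _ _ hjk => sdiff_subset_sdiff_left (hB hjk)) h
  rw [← iUnion_sdiff, hcover, ← compl_eq_univ_sdiff] at this
  exact hd this

theorem Indecomposable.exists_pairwise_disjoint_notMem (hθ : θ.IsRegular)
    (hI : Indecomposable I θ) {B : θ.ord.ToType → Set A} (hB : Monotone B)
    (hcover : ⋃ j, B j = Set.univ) (hpos : ∀ d, (B d)ᶜ ∉ I) :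
    ∃ P : θ.ord.ToType → Set A,
      (Pairwise fun i j => Disjoint (P i) (P j)) ∧ ∀ ξ, P ξ ∉ I := by
  choose next hnext using fun d => hI.exists_sdiff_notMem hB hcover (hpos d)
  obtain ⟨h, hh⟩ := exists_forall_map_lt_of_lt hθ next
  refine ⟨fun ξ => B (next (h ξ)) \ B (h ξ), (pairwise_disjoint_on _).2 fun η ξ hηξ => ?_,
    fun ξ => hnext (h ξ)⟩
  exact disjoint_sdiff_self_right.mono_left (sdiff_subset.trans (hB (hh hηξ).le))

theorem WeaklySaturated.irregular (hθ : θ.IsRegular) (hS : WeaklySaturated I θ)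
    (hI : Indecomposable I θ) : Irregular I θ := by
  intro f hf
  by_contra! hcon
  have hbounded : ∀ x, ∃ j, ∀ i, x ∈ f i → i < j := by
    intro x
    refine exists_forall_lt_of_mk_lt hθ <|
      (mk_set_le {i | x ∈ f i}).trans_eq (mk_ord_toType θ) |>.lt_of_ne fun h => ?_
    have hx : x ∈ ⋂ i ∈ {i | x ∈ f i}, f i := mem_iInter₂.2 fun _ hi => hi
    rwa [hcon _ h] at hx
  set B : θ.ord.ToType → Set A := fun j => {x | ∀ i, x ∈ f i → i < j}
  have hB : Monotone B := fun _ _ hjk _ hx i hi => (hx i hi).trans_le hjk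
  have hcover : ⋃ j, B j = Set.univ := eq_univ_of_forall fun x => mem_iUnion.2 (hbounded x)
  have hpos : ∀ d, (B d)ᶜ ∉ I := fun d hd =>
    hf d (I.lower (show f d ⊆ (B d)ᶜ from fun x hx hxB => (hxB d hx).false) hd)
  obtain ⟨P, hdisj, hP⟩ := hI.exists_pairwise_disjoint_notMem hθ hB hcover hpos
  have : Nonempty θ.ord.ToType := mk_ne_zero_iff.1 (by simpa using hθ.ne_zero)
  obtain ⟨i, hi⟩ := hS.exists_mem_of_pairwise_disjoint hdisj
  exact hP i hi

theorem Irregular.weaklySaturated (hI : Irregular I θ) (hθ : 1 < θ) : WeaklySaturated I θ := by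
  rintro ⟨P, hdisj, hpos, -⟩
  obtain ⟨H, hH, x, hx⟩ := hI P hpos
  obtain ⟨i, hi, j, hj, hij⟩ :=
    nontrivial_coe_sort.1 (one_lt_iff_nontrivial.1 (hH ▸ hθ))
  exact disjoint_left.1 (hdisj hij) (mem_iInter₂.1 hx i hi) (mem_iInter₂.1 hx j hj)

theorem Irregular.indecomposable (hI : Irregular I θ) (hθ : θ ≠ 0) : Indecomposable I θ := by
  intro f hf hmem
  by_contra hU
  have hpos : ∀ i, (⋃ j, f j) \ f i ∉ I := fun i hi =>
    hU (I.lower (subset_union_left.trans sdiff_union_self.superset) (I.sup_mem hi (hmem i)))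
  obtain ⟨H, hH, x, hx⟩ := hI _ hpos
  have hx : ∀ i ∈ H, x ∈ (⋃ j, f j) \ f i := mem_iInter₂.1 hx
  obtain ⟨i₀, hi₀⟩ : H.Nonempty := by
    rwa [← nonempty_coe_sort, ← mk_ne_zero_iff, hH]
  obtain ⟨j, hj⟩ := mem_iUnion.1 (hx i₀ hi₀).1
  obtain ⟨i, hi, hji⟩ := exists_mem_ge_of_mk_eq hH j
  exact (hx i hi).2 (hf hji hj)

theorem stmt10_general (I : Order.Ideal (Set A)) (θ : Cardinal.{0})
    (hreg : θ.IsRegular) :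
    (WeaklySaturated I θ ∧ Indecomposable I θ) ↔ Irregular I θ :=
  ⟨fun ⟨hS, hI⟩ => hS.irregular hreg hI, fun h =>
    ⟨h.weaklySaturated (by simpa using hreg.nat_lt 1), h.indecomposable hreg.ne_zero⟩⟩

/-- for a regular uncountable cardinal `θ`, an ideal `I` is weakly
`θ`-saturated and `θ`-indecomposable iff it is `θ`-irregular. -/
theorem stmt10 (I : Order.Ideal (Set A)) (θ : Cardinal.{0})
    (hreg : θ.IsRegular) (hunc : ℵ₀ < θ) :
    (WeaklySaturated I θ ∧ Indecomposable I θ) ↔ Irregular I θ :=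
  stmt10_general I θ hreg

end Paper
end

section
/- An ideal I on a set A is κ-complete (closed under unions of fewer than κ sets in I) if and only if I is θ-indecomposable for every regular cardinal θ<κ. -/
open Cardinal Set

namespace Paper

variable {A : Type}

theorem _root_.Set.iUnion_accumulate_of_isCofinal {α β : Type*} [Preorder α] {S : Set α}
    (hS : IsCofinal S) (F : α → Set β) : ⋃ s : S, accumulate F s = ⋃ x, F x := by
  refine (iUnion_subset fun s => accumulate_subset_iUnion _).antisymm (iUnion_subset fun x => ?_)
  obtain ⟨s, hsS, hxs⟩ := hS x
  exact subset_accumulate.trans <| (monotone_accumulate hxs).trans <|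
    subset_iUnion (fun s : S => accumulate F s) ⟨s, hsS⟩

theorem _root_.Cardinal.mk_Iic_toType_ord_lt {θ : Cardinal} (hθ : ℵ₀ ≤ θ) (i : θ.ord.ToType) :
    #(Iic i) < θ := by
  simpa using mk_Iic_lt i (by simp) (by simpa using hθ)

def IsComplete (I : Order.Ideal (Set A)) (κ : Cardinal.{0}) : Prop :=
  ∀ (ι : Type) (f : ι → Set A), #ι < κ → (∀ i, f i ∈ I) → (⋃ i, f i) ∈ I

namespace IsComplete

variable {I : Order.Ideal (Set A)} {κ μ : Cardinal.{0}}

theorem mono (h : IsComplete I κ) (hμκ : μ ≤ κ) : IsComplete I μ :=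
  fun ι f hι => h ι f (hι.trans_le hμκ)

theorem indecomposable (h : IsComplete I κ) (hμκ : μ < κ) : Indecomposable I μ :=
  fun f _ => h _ f (by rwa [mk_ord_toType])

theorem biUnion_mem (h : IsComplete I κ) {ι : Type} {f : ι → Set A} {s : Set ι} (hs : #s < κ)
    (hf : ∀ i ∈ s, f i ∈ I) : (⋃ i ∈ s, f i) ∈ I := by
  rw [biUnion_eq_iUnion]
  exact h s _ hs fun i => hf i i.2

theorem accumulate_mem (h : IsComplete I κ) (hκ : ℵ₀ ≤ κ) {f : κ.ord.ToType → Set A}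
    (hf : ∀ i, f i ∈ I) (i : κ.ord.ToType) : accumulate f i ∈ I :=
  h.biUnion_mem (mk_Iic_toType_ord_lt hκ i) fun j _ => hf j

/-- Accumulating turns an arbitrary `κ`-sequence into an increasing one with the same union. -/
theorem iUnion_mem_of_indecomposable (h : IsComplete I κ) (hind : Indecomposable I κ)
    (hκ : ℵ₀ ≤ κ) {ι : Type} (hι : #ι = κ) {f : ι → Set A} (hf : ∀ i, f i ∈ I) :
    (⋃ i, f i) ∈ I := by
  obtain ⟨e⟩ : Nonempty (κ.ord.ToType ≃ ι) := Cardinal.eq.mp (by rw [mk_ord_toType, hι])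
  rw [← e.surjective.iUnion_comp, ← iUnion_accumulate]
  exact hind _ monotone_accumulate (h.accumulate_mem hκ fun i => hf (e i))

/-- Along a cofinal subset of `μ` of size `cf μ`, the initial segments of a `μ`-sequence have
union in `I` by `μ`-completeness, so indecomposability at `cf μ` finishes. -/
theorem iUnion_mem_of_indecomposable_cof (h : IsComplete I μ) (hμ : ℵ₀ ≤ μ)
    (hind : Indecomposable I μ.ord.cof) {ι : Type} (hι : #ι = μ) {f : ι → Set A}
    (hf : ∀ i, f i ∈ I) : (⋃ i, f i) ∈ I := by
  obtain ⟨e⟩ : Nonempty (μ.ord.ToType ≃ ι) := Cardinal.eq.mp (by rw [mk_ord_toType, hι])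
  obtain ⟨S, hS, hScard⟩ := Order.exists_cof_eq μ.ord.ToType
  rw [Ordinal.cof_toType] at hScard
  have hcof : ℵ₀ ≤ μ.ord.cof := (isRegular_cof (isSuccLimit_ord hμ)).aleph0_le
  rw [← e.surjective.iUnion_comp, ← Set.iUnion_accumulate_of_isCofinal hS]
  exact (h.mono (Ordinal.cof_ord_le μ)).iUnion_mem_of_indecomposable hind hcof hScard
    fun s => h.accumulate_mem hμ (fun i => hf (e i)) s

end IsComplete

theorem isComplete_of_indecomposable {I : Order.Ideal (Set A)} {κ : Cardinal.{0}}
    (H : ∀ θ : Cardinal.{0}, θ.IsRegular → θ < κ → Indecomposable I θ) : IsComplete I κ := by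
  induction κ using WellFoundedLT.induction with
  | _ κ IH =>
  intro ι f hι hf
  have hcomp : IsComplete I #ι := IH _ hι fun θ hθ hθι => H θ hθ (hθι.trans hι)
  rcases lt_or_ge #ι ℵ₀ with hfin | hinf
  · have : Finite ι := lt_aleph0_iff_finite.mp hfin
    exact Order.Ideal.iSup_mem hf
  · have hreg : (#ι).ord.cof.IsRegular := isRegular_cof (isSuccLimit_ord hinf)
    exact hcomp.iUnion_mem_of_indecomposable_cof hinf
      (H _ hreg ((Ordinal.cof_ord_le _).trans_lt hι)) rfl hf

/-- an ideal `I` is `κ`-complete (closed under unions of fewer than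
`κ`-many members) iff `I` is `θ`-indecomposable for every regular `θ < κ`. -/
theorem stmt12 (I : Order.Ideal (Set A)) (κ : Cardinal.{0}) :
    (∀ (ι : Type) (f : ι → Set A), Cardinal.mk ι < κ → (∀ i, f i ∈ I) → (⋃ i, f i) ∈ I) ↔
    (∀ θ : Cardinal.{0}, θ.IsRegular → θ < κ → Indecomposable I θ) :=
  ⟨fun h _ _ hθκ => IsComplete.indecomposable h hθκ, isComplete_of_indecomposable⟩

end Paper
end

section
/- Suppose λ is a Jónsson cardinal and I is a co-Jónsson ideal on λ, with dual filter witnessed by a coloring G:[λ]^{<ω}→λ as in the coloring characterization. If λ can be partitioned into θ-many disjoint I-positive sets ⟨A_i : i<θ⟩, then there is a coloring c:[λ]^{<ω}→θ with no weakly homogeneous set of size λ (i.e. witnessing λ↛[λ]^{<ω}_θ). -/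
/-!
Colour a finite set `s` by the index of the piece `A_i` of the partition that contains `G s`.
For `A` of size `λ` the set `{G s | s ∈ [A]^{<ω}}` lies in the dual filter of `I`, so it meets
every `I`-positive piece; hence every colour `i < θ` is attained on `[A]^{<ω}`.
-/

open Cardinal Set

namespace Paper

/-- `λ → [λ]^{<ω}_λ`: `λ` is a Jónsson cardinal. For every coloring `F` of the finite
subsets of `λ` by ordinals `< λ` there is `A ⊆ λ` of full size `λ` omitting some color. -/
def IsJonsson (lam : Cardinal) : Prop :=
  ∀ F : Finset Ordinal → Ordinal,
    (∀ s : Finset Ordinal, ↑s ⊆ Set.Iio lam.ord → F s < lam.ord) →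
    ∃ A : Set Ordinal, A ⊆ Set.Iio lam.ord ∧ Cardinal.mk A.Elem = Cardinal.lift.{1, 0} lam ∧
      ∃ b < lam.ord, ∀ s : Finset Ordinal, ↑s ⊆ A → F s ≠ b

section PartIndex

variable {α ι : Type*} [Nonempty ι] (f : ι → Set α) (S : Set ι)

/-- The index of the piece `f i`, `i ∈ S`, containing `x`; a junk index if there is none. -/
noncomputable def partIndex (x : α) : ι :=
  Classical.epsilon fun i => i ∈ S ∧ x ∈ f i

variable {f S}

theorem partIndex_spec {x : α} (hx : x ∈ ⋃ i ∈ S, f i) :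
    partIndex f S x ∈ S ∧ x ∈ f (partIndex f S x) := by
  obtain ⟨i, hi, hxi⟩ := mem_iUnion₂.mp hx
  exact Classical.epsilon_spec (p := fun i => i ∈ S ∧ x ∈ f i) ⟨i, hi, hxi⟩

theorem partIndex_eq_of_mem (hdisj : S.PairwiseDisjoint f) {i : ι} (hi : i ∈ S) {x : α}
    (hx : x ∈ f i) : partIndex f S x = i := by
  obtain ⟨hjS, hxj⟩ := partIndex_spec (mem_biUnion hi hx)
  exact hdisj.elim hjS hi (not_disjoint_iff.mpr ⟨x, hxj, hx⟩)

end PartIndex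

theorem inter_nonempty_of_notMem_ideal {α : Type*} {I : Order.Ideal (Set α)} {B U R : Set α}
    (hB : B ∉ I) (hBU : B ⊆ U) (hUR : U \ R ∈ I) : (B ∩ R).Nonempty := by
  rw [← not_disjoint_iff_nonempty_inter]
  intro hdisj
  have hBsub : B ⊆ U \ R := fun x hx => ⟨hBU hx, disjoint_left.mp hdisj hx⟩
  exact hB (I.lower hBsub hUR)

theorem stmt15_general (lam θ : Cardinal)
    (I : Order.Ideal (Set Ordinal))
    (G : Finset Ordinal → Ordinal)
    (hGrange : ∀ s : Finset Ordinal, ↑s ⊆ Set.Iio lam.ord → G s < lam.ord)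
    (hG : ∀ A : Set Ordinal, A ⊆ Set.Iio lam.ord →
        Cardinal.mk A.Elem = Cardinal.lift.{1, 0} lam →
        Set.Iio lam.ord \ {b : Ordinal | ∃ s : Finset Ordinal, ↑s ⊆ A ∧ G s = b} ∈ I)
    (f : Ordinal → Set Ordinal)
    (hdisj : ∀ i < θ.ord, ∀ j < θ.ord, i ≠ j → Disjoint (f i) (f j))
    (hpos : ∀ i < θ.ord, f i ∉ I)
    (hcover : (⋃ i ∈ Set.Iio θ.ord, f i) = Set.Iio lam.ord) :
    ∃ c : Finset Ordinal → Ordinal,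
      (∀ s : Finset Ordinal, ↑s ⊆ Set.Iio lam.ord → c s < θ.ord) ∧
      ∀ A : Set Ordinal, A ⊆ Set.Iio lam.ord →
        Cardinal.mk A.Elem = Cardinal.lift.{1, 0} lam →
        ∀ b < θ.ord, ∃ s : Finset Ordinal, ↑s ⊆ A ∧ c s = b := by
  have hpairwise : (Iio θ.ord).PairwiseDisjoint f := fun i hi j hj => hdisj i hi j hj
  refine ⟨fun s => partIndex f (Iio θ.ord) (G s), fun s hs => ?_, fun A hA hcard b hb => ?_⟩
  · exact (partIndex_spec (hcover ▸ hGrange s hs)).1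
  · have hfb : f b ⊆ Iio lam.ord := hcover ▸ subset_biUnion_of_mem (u := f) hb
    obtain ⟨x, hxb, s, hsA, rfl⟩ :=
      inter_nonempty_of_notMem_ideal (hpos b hb) hfb (hG A hA hcard)
    exact ⟨s, hsA, partIndex_eq_of_mem hpairwise hb hxb⟩

/-- if `λ` is Jónsson, `I` is a co-Jónsson ideal on `λ` as witnessed by a
coloring `G` (the range of `G` on any set of size `λ` is in the dual filter), and `λ` is
partitioned into `θ`-many disjoint `I`-positive sets, then there is a coloring
`c : [λ]^{<ω} → θ` with no weakly homogeneous set of size `λ`, witnessing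
`λ ↛ [λ]^{<ω}_θ`. -/
theorem stmt15 (lam θ : Cardinal) (hJ : IsJonsson lam)
    (I : Order.Ideal (Set Ordinal))
    (G : Finset Ordinal → Ordinal)
    (hGrange : ∀ s : Finset Ordinal, ↑s ⊆ Set.Iio lam.ord → G s < lam.ord)
    (hG : ∀ A : Set Ordinal, A ⊆ Set.Iio lam.ord →
        Cardinal.mk A.Elem = Cardinal.lift.{1, 0} lam →
        Set.Iio lam.ord \ {b : Ordinal | ∃ s : Finset Ordinal, ↑s ⊆ A ∧ G s = b} ∈ I)
    (f : Ordinal → Set Ordinal)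
    (hdisj : ∀ i < θ.ord, ∀ j < θ.ord, i ≠ j → Disjoint (f i) (f j))
    (hpos : ∀ i < θ.ord, f i ∉ I)
    (hcover : (⋃ i ∈ Set.Iio θ.ord, f i) = Set.Iio lam.ord) :
    ∃ c : Finset Ordinal → Ordinal,
      (∀ s : Finset Ordinal, ↑s ⊆ Set.Iio lam.ord → c s < θ.ord) ∧
      ∀ A : Set Ordinal, A ⊆ Set.Iio lam.ord →
        Cardinal.mk A.Elem = Cardinal.lift.{1, 0} lam →
        ∀ b < θ.ord, ∃ s : Finset Ordinal, ↑s ⊆ A ∧ c s = b :=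
  stmt15_general lam θ I G hGrange hG f hdisj hpos hcover

end Paper
end
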